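/- For n = 2 (so p_2 = 3), the set K = {k : 3 ≤ k ≤ 1000 and S_k(p_2) is prime} has exactly 71 elements. (This is one of the paper's computations supporting the strengthened conjecture that admissible lengths occur repeatedly.) -/

import Mathlib

set_option maxRecDepth 1000000
set_option maxHeartbeats 4000000

/-- `p m` is the m-th prime number (`p 1 = 2`, `p 2 = 3`, ...). -/
noncomputable def p (m : ℕ) : ℕ := Nat.nth Nat.Prime (m - 1)

/-- `S k n = p_n + p_{n+1} + ⋯ + p_{n+k-1}`, the sum of `k` consecutive primes
starting at the `n`-th prime. -/
noncomputable def S (k n : ℕ) : ℕ := ∑ i ∈ Finset.range k, p (n + i)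

/-- Trial division by odd candidates `d, d+2, …`. -/
def noFacUp (n : ℕ) : ℕ → ℕ → Bool
  | _, 0 => true
  | d, fuel+1 => if n < d*d then true else (decide (n % d ≠ 0)) && noFacUp n (d+2) fuel

/-- Primality test. -/
def isPrimeB (n : ℕ) : Bool :=
  decide (2 ≤ n) && ((n == 2) || (decide (n % 2 ≠ 0) && noFacUp n 3 n))

/-- `m, m+1, …, m+fuel-1` are all non-prime. -/
def compRun (m : ℕ) : ℕ → Bool
  | 0 => true
  | fuel+1 => !isPrimeB (m + fuel) && compRun m fuel

/-- The list consists of the consecutive primes starting from the least prime `≥ m`. -/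
def chain : List ℕ → ℕ → Bool
  | [], _ => true
  | a :: l, m => decide (m ≤ a) && compRun m (a - m) && isPrimeB a && chain l (a+1)

/-- The first list is the partial-sum sequence of the second. -/
def qOK : List ℕ → List ℕ → Bool
  | _, [] => true
  | q1 :: q2 :: qs, a :: as => (q2 == q1 + a) && qOK (q2 :: qs) as
  | _, _ :: _ => false

lemma noFacUp_spec (n : ℕ) : ∀ fuel d, n < (d+2*fuel)*(d+2*fuel) →
    (noFacUp n d fuel = true ↔ ∀ m, d ≤ m → m*m ≤ n → m % 2 = d % 2 → ¬ m ∣ n) := by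
  intro fuel
  induction fuel with
  | zero =>
    intro d h
    simp only [Nat.mul_zero, Nat.add_zero] at h
    simp only [noFacUp, true_iff]
    intro m hdm hm _
    exact absurd (lt_of_le_of_lt hm h) (not_lt.2 (Nat.mul_le_mul hdm hdm)).elim
  | succ fuel ih =>
    intro d h
    rw [noFacUp]
    by_cases hlt : n < d*d
    · simp only [hlt, if_true, true_iff]
      intro m hdm hm _
      exact absurd (lt_of_le_of_lt hm hlt) (not_lt.2 (Nat.mul_le_mul hdm hdm))
    · simp only [hlt, if_false, Bool.and_eq_true, decide_eq_true_eq]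
      have h' : n < (d+2+2*fuel)*(d+2+2*fuel) := by
        have e : d+2+2*fuel = d+2*(fuel+1) := by ring
        rw [e]; exact h
      rw [ih (d+2) h']
      constructor
      · rintro ⟨hd, hrest⟩ m hdm hm hpar
        rcases eq_or_lt_of_le hdm with rfl | hlt'
        · exact fun hdvd => hd (Nat.dvd_iff_mod_eq_zero.mp hdvd)
        · have hge : d + 2 ≤ m := by omega
          exact hrest m hge hm (by omega)
      · intro hall
        refine ⟨fun hmod => hall d le_rfl (not_lt.1 hlt) rfl
          (Nat.dvd_iff_mod_eq_zero.mpr hmod), ?_⟩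
        intro m hdm hm hpar
        exact hall m (by omega) hm (by omega)

lemma isPrimeB_iff (n : ℕ) : isPrimeB n = true ↔ Nat.Prime n := by
  rw [isPrimeB, Bool.and_eq_true, Bool.or_eq_true, beq_iff_eq, Bool.and_eq_true,
    decide_eq_true_eq, decide_eq_true_eq]
  have hb : n < (3+2*n)*(3+2*n) := by nlinarith
  rw [noFacUp_spec n n 3 hb, Nat.prime_def_le_sqrt]
  constructor
  · rintro ⟨h2, rfl | ⟨hodd, hnf⟩⟩
    · exact ⟨le_rfl, fun m h2m hms hdvd => by interval_cases m <;> simp_all⟩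
    · refine ⟨h2, fun m h2m hms hdvd => ?_⟩
      rcases Nat.even_or_odd m with he | ho
      · have h2n : (2 : ℕ) ∣ n := dvd_trans he.two_dvd hdvd
        exact hodd (Nat.dvd_iff_mod_eq_zero.mp h2n)
      · have hm2 : m % 2 = 1 := Nat.odd_iff.mp ho
        have h3m : 3 ≤ m := by omega
        have hmod : m % 2 = 3 % 2 := by omega
        exact hnf m h3m (Nat.le_sqrt.1 hms) hmod hdvd
  · rintro ⟨h2, hall⟩
    refine ⟨h2, ?_⟩
    by_cases h2n : n = 2
    · exact Or.inl h2n
    · refine Or.inr ⟨?_, ?_⟩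
      · intro hmod
        have : (2 : ℕ) ∣ n := Nat.dvd_iff_mod_eq_zero.mpr hmod
        have h4 : 2 ≤ Nat.sqrt n ∨ n < 4 := by
          rcases lt_or_ge n 4 with h | h
          · exact Or.inr h
          · exact Or.inl (Nat.le_sqrt.2 (by omega))
        rcases h4 with h4 | h4
        · exact hall 2 le_rfl h4 this
        · interval_cases n <;> simp_all
      · intro m h3m hms hpar hdvd
        exact hall m (by omega) (Nat.le_sqrt.2 hms) hdvd

lemma compRun_spec (m : ℕ) : ∀ fuel, compRun m fuel = true →
    Nat.count Nat.Prime (m + fuel) = Nat.count Nat.Prime m := by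
  intro fuel
  induction fuel with
  | zero => intro _; rfl
  | succ fuel ih =>
    intro h
    rw [compRun, Bool.and_eq_true, Bool.not_eq_true'] at h
    have hnp : ¬ Nat.Prime (m + fuel) := fun hc => by
      have := h.1; rw [(isPrimeB_iff _).2 hc] at this; simp at this
    rw [show m + (fuel+1) = (m + fuel) + 1 from rfl, Nat.count_succ, if_neg hnp,
      Nat.add_zero, ih h.2]

lemma chain_spec : ∀ (l : List ℕ) (m : ℕ), chain l m = true →
    ∀ i, i < l.length → Nat.nth Nat.Prime (Nat.count Nat.Prime m + i) = l.getD i 0 := by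
  intro l
  induction l with
  | nil => intro m _ i hi; simp at hi
  | cons a l ih =>
    intro m hc i hi
    rw [chain, Bool.and_eq_true, Bool.and_eq_true, Bool.and_eq_true, decide_eq_true_eq] at hc
    obtain ⟨⟨⟨hma, hcr⟩, hpa⟩, hch⟩ := hc
    have hpa' : Nat.Prime a := (isPrimeB_iff a).1 hpa
    have hca : Nat.count Nat.Prime a = Nat.count Nat.Prime m := by
      have := compRun_spec m (a - m) hcr
      rwa [Nat.add_sub_cancel' hma] at this
    have hca1 : Nat.count Nat.Prime (a+1) = Nat.count Nat.Prime m + 1 := by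
      rw [Nat.count_succ, if_pos hpa', hca]
    cases i with
    | zero =>
      have := Nat.nth_count hpa'
      rw [hca] at this
      simpa using this
    | succ i =>
      have := ih (a+1) hch i (by simpa using hi)
      rw [hca1] at this
      simpa [Nat.add_assoc, Nat.add_comm 1 i] using this

lemma qOK_spec : ∀ (as qs : List ℕ), qOK qs as = true →
    ∀ i, i < as.length → qs.getD (i+1) 0 = qs.getD i 0 + as.getD i 0 := by
  intro as
  induction as with
  | nil => intro qs _ i hi; simp at hi
  | cons a as ih =>
    intro qs hq i hi
    match qs with
    | [] => simp [qOK] at hq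
    | [q1] => simp [qOK] at hq
    | q1 :: q2 :: qs =>
      rw [qOK, Bool.and_eq_true, beq_iff_eq] at hq
      obtain ⟨rfl, hq⟩ := hq
      cases i with
      | zero => simp [List.getD]
      | succ i =>
        have := ih ((q1 + a) :: qs) hq i (by simpa using hi)
        simpa [List.getD] using this

/-- The first 1001 primes. -/
def P : List ℕ := [2, 3, 5, 7, 11, 13, 17, 19, 23, 29, 31, 37, 41, 43, 47, 53, 59, 61, 67, 71, 73, 79, 83, 89, 97, 101, 103, 107, 109, 113, 127, 131, 137, 139, 149, 151, 157, 163, 167, 173, 179, 181, 191, 193, 197, 199, 211, 223, 227, 229, 233, 239, 241, 251, 257, 263, 269, 271, 277, 281, 283, 293, 307, 311, 313, 317, 331, 337, 347, 349, 353, 359, 367, 373, 379, 383, 389, 397, 401, 409, 419, 421, 431, 433, 439, 443, 449, 457, 461, 463, 467, 479, 487, 491, 499, 503, 509, 521, 523, 541, 547, 557, 563, 569, 571, 577, 587, 593, 599, 601, 607, 613, 617, 619, 631, 641, 643, 647, 653, 659, 661, 673, 677, 683, 691, 701, 709, 719, 727, 733, 739, 743, 751, 757, 761, 769, 773, 787,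 797, 809, 811, 821, 823, 827, 829, 839, 853, 857, 859, 863, 877, 881, 883, 887, 907, 911, 919, 929, 937, 941, 947, 953, 967, 971, 977, 983, 991, 997, 1009, 1013, 1019, 1021, 1031, 1033, 1039, 1049, 1051, 1061, 1063, 1069, 1087, 1091, 1093, 1097, 1103, 1109, 1117, 1123, 1129, 1151, 1153, 1163, 1171, 1181, 1187, 1193, 1201, 1213, 1217, 1223, 1229, 1231, 1237, 1249, 1259, 1277, 1279, 1283, 1289, 1291, 1297, 1301, 1303, 1307, 1319, 1321, 1327, 1361, 1367, 1373, 1381, 1399, 1409, 1423, 1427, 1429, 1433, 1439, 1447, 1451, 1453, 1459, 1471, 1481, 1483, 1487, 1489, 1493, 1499, 1511, 1523, 1531, 1543, 1549, 1553, 1559, 1567, 1571, 1579, 1583, 1597, 1601, 1607, 1609, 1613, 1619, 1621, 1627, 1637, 1657, 1663, 1667, 1669, 1693, 1697, 1699, 1709, 1721, 1723, 1733, 1741, 1747, 1753, 1759, 1777, 1783, 1787, 1789, 1801, 1811, 1823, 1831, 1847, 1861, 1867, 1871, 1873, 1877, 1879, 1889, 1901, 1907, 1913, 1931, 1933, 1949,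 1951, 1973, 1979, 1987, 1993, 1997, 1999, 2003, 2011, 2017, 2027, 2029, 2039, 2053, 2063, 2069, 2081, 2083, 2087, 2089, 2099, 2111, 2113, 2129, 2131, 2137, 2141, 2143, 2153, 2161, 2179, 2203, 2207, 2213, 2221, 2237, 2239, 2243, 2251, 2267, 2269, 2273, 2281, 2287, 2293, 2297, 2309, 2311, 2333, 2339, 2341, 2347, 2351, 2357, 2371, 2377, 2381, 2383, 2389, 2393, 2399, 2411, 2417, 2423, 2437, 2441, 2447, 2459, 2467, 2473, 2477, 2503, 2521, 2531, 2539, 2543, 2549, 2551, 2557, 2579, 2591, 2593, 2609, 2617, 2621, 2633, 2647, 2657, 2659, 2663, 2671, 2677, 2683, 2687, 2689, 2693, 2699, 2707, 2711, 2713, 2719, 2729, 2731, 2741, 2749, 2753, 2767, 2777, 2789, 2791, 2797, 2801, 2803, 2819, 2833, 2837, 2843, 2851, 2857, 2861, 2879, 2887, 2897, 2903, 2909, 2917, 2927, 2939, 2953, 2957, 2963, 2969, 2971, 2999, 3001, 3011, 3019, 3023, 3037, 3041, 3049, 3061, 3067, 3079, 3083, 3089, 3109, 3119, 3121, 3137,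 3163, 3167, 3169, 3181, 3187, 3191, 3203, 3209, 3217, 3221, 3229, 3251, 3253, 3257, 3259, 3271, 3299, 3301, 3307, 3313, 3319, 3323, 3329, 3331, 3343, 3347, 3359, 3361, 3371, 3373, 3389, 3391, 3407, 3413, 3433, 3449, 3457, 3461, 3463, 3467, 3469, 3491, 3499, 3511, 3517, 3527, 3529, 3533, 3539, 3541, 3547, 3557, 3559, 3571, 3581, 3583, 3593, 3607, 3613, 3617, 3623, 3631, 3637, 3643, 3659, 3671, 3673, 3677, 3691, 3697, 3701, 3709, 3719, 3727, 3733, 3739, 3761, 3767, 3769, 3779, 3793, 3797, 3803, 3821, 3823, 3833, 3847, 3851, 3853, 3863, 3877, 3881, 3889, 3907, 3911, 3917, 3919, 3923, 3929, 3931, 3943, 3947, 3967, 3989, 4001, 4003, 4007, 4013, 4019, 4021, 4027, 4049, 4051, 4057, 4073, 4079, 4091, 4093, 4099, 4111, 4127, 4129, 4133, 4139, 4153, 4157, 4159, 4177, 4201, 4211, 4217, 4219, 4229, 4231, 4241, 4243, 4253, 4259, 4261, 4271, 4273, 4283, 4289, 4297, 4327, 4337, 4339, 4349, 4357, 4363,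 4373, 4391, 4397, 4409, 4421, 4423, 4441, 4447, 4451, 4457, 4463, 4481, 4483, 4493, 4507, 4513, 4517, 4519, 4523, 4547, 4549, 4561, 4567, 4583, 4591, 4597, 4603, 4621, 4637, 4639, 4643, 4649, 4651, 4657, 4663, 4673, 4679, 4691, 4703, 4721, 4723, 4729, 4733, 4751, 4759, 4783, 4787, 4789, 4793, 4799, 4801, 4813, 4817, 4831, 4861, 4871, 4877, 4889, 4903, 4909, 4919, 4931, 4933, 4937, 4943, 4951, 4957, 4967, 4969, 4973, 4987, 4993, 4999, 5003, 5009, 5011, 5021, 5023, 5039, 5051, 5059, 5077, 5081, 5087, 5099, 5101, 5107, 5113, 5119, 5147, 5153, 5167, 5171, 5179, 5189, 5197, 5209, 5227, 5231, 5233, 5237, 5261, 5273, 5279, 5281, 5297, 5303, 5309, 5323, 5333, 5347, 5351, 5381, 5387, 5393, 5399, 5407, 5413, 5417, 5419, 5431, 5437, 5441, 5443, 5449, 5471, 5477, 5479, 5483, 5501, 5503, 5507, 5519, 5521, 5527, 5531, 5557, 5563, 5569, 5573, 5581, 5591, 5623, 5639, 5641, 5647, 5651, 5653, 5657, 5659,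 5669, 5683, 5689, 5693, 5701, 5711, 5717, 5737, 5741, 5743, 5749, 5779, 5783, 5791, 5801, 5807, 5813, 5821, 5827, 5839, 5843, 5849, 5851, 5857, 5861, 5867, 5869, 5879, 5881, 5897, 5903, 5923, 5927, 5939, 5953, 5981, 5987, 6007, 6011, 6029, 6037, 6043, 6047, 6053, 6067, 6073, 6079, 6089, 6091, 6101, 6113, 6121, 6131, 6133, 6143, 6151, 6163, 6173, 6197, 6199, 6203, 6211, 6217, 6221, 6229, 6247, 6257, 6263, 6269, 6271, 6277, 6287, 6299, 6301, 6311, 6317, 6323, 6329, 6337, 6343, 6353, 6359, 6361, 6367, 6373, 6379, 6389, 6397, 6421, 6427, 6449, 6451, 6469, 6473, 6481, 6491, 6521, 6529, 6547, 6551, 6553, 6563, 6569, 6571, 6577, 6581, 6599, 6607, 6619, 6637, 6653, 6659, 6661, 6673, 6679, 6689, 6691, 6701, 6703, 6709, 6719, 6733, 6737, 6761, 6763, 6779, 6781, 6791, 6793, 6803, 6823, 6827, 6829, 6833, 6841, 6857, 6863, 6869, 6871, 6883, 6899, 6907, 6911, 6917, 6947, 6949, 6959, 6961, 6967, 6971,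 6977, 6983, 6991, 6997, 7001, 7013, 7019, 7027, 7039, 7043, 7057, 7069, 7079, 7103, 7109, 7121, 7127, 7129, 7151, 7159, 7177, 7187, 7193, 7207, 7211, 7213, 7219, 7229, 7237, 7243, 7247, 7253, 7283, 7297, 7307, 7309, 7321, 7331, 7333, 7349, 7351, 7369, 7393, 7411, 7417, 7433, 7451, 7457, 7459, 7477, 7481, 7487, 7489, 7499, 7507, 7517, 7523, 7529, 7537, 7541, 7547, 7549, 7559, 7561, 7573, 7577, 7583, 7589, 7591, 7603, 7607, 7621, 7639, 7643, 7649, 7669, 7673, 7681, 7687, 7691, 7699, 7703, 7717, 7723, 7727, 7741, 7753, 7757, 7759, 7789, 7793, 7817, 7823, 7829, 7841, 7853, 7867, 7873, 7877, 7879, 7883, 7901, 7907, 7919, 7927]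

/-- `Q[k] = S k 2` for `k ≤ 1000`: partial sums of primes starting from `3`. -/
def Q : List ℕ := [0, 3, 8, 15, 26, 39, 56, 75, 98, 127, 158, 195, 236, 279, 326, 379, 438, 499, 566, 637, 710, 789, 872, 961, 1058, 1159, 1262, 1369, 1478, 1591, 1718, 1849, 1986, 2125, 2274, 2425, 2582, 2745, 2912, 3085, 3264, 3445, 3636, 3829, 4026, 4225, 4436, 4659, 4886, 5115, 5348, 5587, 5828, 6079, 6336, 6599, 6868, 7139, 7416, 7697, 7980, 8273, 8580, 8891, 9204, 9521, 9852, 10189, 10536, 10885, 11238, 11597, 11964, 12337, 12716, 13099, 13488, 13885, 14286, 14695, 15114, 15535, 15966, 16399, 16838, 17281, 17730, 18187, 18648, 19111, 19578, 20057, 20544, 21035, 21534, 22037, 22546, 23067, 23590, 24131, 24678, 25235, 25798, 26367, 26938, 27515, 28102, 28695, 29294, 29895, 30502, 31115, 31732, 32351, 32982, 33623, 34266, 34913, 35566, 36225, 36886, 37559, 38236, 38919, 39610, 40311, 41020, 41739, 42466, 43199, 43938, 44681, 45432, 46189, 46950, 47719, 48492, 49279, 50076, 50885, 51696, 52517, 53340,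 54167, 54996, 55835, 56688, 57545, 58404, 59267, 60144, 61025, 61908, 62795, 63702, 64613, 65532, 66461, 67398, 68339, 69286, 70239, 71206, 72177, 73154, 74137, 75128, 76125, 77134, 78147, 79166, 80187, 81218, 82251, 83290, 84339, 85390, 86451, 87514, 88583, 89670, 90761, 91854, 92951, 94054, 95163, 96280, 97403, 98532, 99683, 100836, 101999, 103170, 104351, 105538, 106731, 107932, 109145, 110362, 111585, 112814, 114045, 115282, 116531, 117790, 119067, 120346, 121629, 122918, 124209, 125506, 126807, 128110, 129417, 130736, 132057, 133384, 134745, 136112, 137485, 138866, 140265, 141674, 143097, 144524, 145953, 147386, 148825, 150272, 151723, 153176, 154635, 156106, 157587, 159070, 160557, 162046, 163539, 165038, 166549, 168072, 169603, 171146, 172695, 174248, 175807, 177374, 178945, 180524, 182107, 183704, 185305, 186912, 188521, 190134, 191753, 193374, 195001, 196638, 198295, 199958, 201625, 203294, 204987, 206684, 208383, 210092, 211813, 213536, 215269, 217010, 218757, 220510, 222269, 224046, 225829, 227616, 229405, 231206, 233017, 234840, 236671, 238518, 240379, 242246, 244117, 245990, 247867, 249746, 251635, 253536, 255443, 257356,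 259287, 261220, 263169, 265120, 267093, 269072, 271059, 273052, 275049, 277048, 279051, 281062, 283079, 285106, 287135, 289174, 291227, 293290, 295359, 297440, 299523, 301610, 303699, 305798, 307909, 310022, 312151, 314282, 316419, 318560, 320703, 322856, 325017, 327196, 329399, 331606, 333819, 336040, 338277, 340516, 342759, 345010, 347277, 349546, 351819, 354100, 356387, 358680, 360977, 363286, 365597, 367930, 370269, 372610, 374957, 377308, 379665, 382036, 384413, 386794, 389177, 391566, 393959, 396358, 398769, 401186, 403609, 406046, 408487, 410934, 413393, 415860, 418333, 420810, 423313, 425834, 428365, 430904, 433447, 435996, 438547, 441104, 443683, 446274, 448867, 451476, 454093, 456714, 459347, 461994, 464651, 467310, 469973, 472644, 475321, 478004, 480691, 483380, 486073, 488772, 491479, 494190, 496903, 499622, 502351, 505082, 507823, 510572, 513325, 516092, 518869, 521658, 524449, 527246, 530047, 532850, 535669, 538502, 541339, 544182, 547033, 549890, 552751, 555630, 558517, 561414, 564317, 567226, 570143, 573070, 576009, 578962, 581919, 584882, 587851, 590822, 593821, 596822, 599833, 602852, 605875, 608912, 611953, 615002, 618063, 621130, 624209, 627292, 630381, 633490,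 636609, 639730, 642867, 646030, 649197, 652366, 655547, 658734, 661925, 665128, 668337, 671554, 674775, 678004, 681255, 684508, 687765, 691024, 694295, 697594, 700895, 704202, 707515, 710834, 714157, 717486, 720817, 724160, 727507, 730866, 734227, 737598, 740971, 744360, 747751, 751158, 754571, 758004, 761453, 764910, 768371, 771834, 775301, 778770, 782261, 785760, 789271, 792788, 796315, 799844, 803377, 806916, 810457, 814004, 817561, 821120, 824691, 828272, 831855, 835448, 839055, 842668, 846285, 849908, 853539, 857176, 860819, 864478, 868149, 871822, 875499, 879190, 882887, 886588, 890297, 894016, 897743, 901476, 905215, 908976, 912743, 916512, 920291, 924084, 927881, 931684, 935505, 939328, 943161, 947008, 950859, 954712, 958575, 962452, 966333, 970222, 974129, 978040, 981957, 985876, 989799, 993728, 997659, 1001602, 1005549, 1009516, 1013505, 1017506, 1021509, 1025516, 1029529, 1033548, 1037569, 1041596, 1045645, 1049696, 1053753, 1057826, 1061905, 1065996, 1070089, 1074188, 1078299, 1082426, 1086555, 1090688, 1094827, 1098980, 1103137, 1107296, 1111473, 1115674, 1119885, 1124102, 1128321, 1132550, 1136781, 1141022, 1145265, 1149518, 1153777,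 1158038, 1162309, 1166582, 1170865, 1175154, 1179451, 1183778, 1188115, 1192454, 1196803, 1201160, 1205523, 1209896, 1214287, 1218684, 1223093, 1227514, 1231937, 1236378, 1240825, 1245276, 1249733, 1254196, 1258677, 1263160, 1267653, 1272160, 1276673, 1281190, 1285709, 1290232, 1294779, 1299328, 1303889, 1308456, 1313039, 1317630, 1322227, 1326830, 1331451, 1336088, 1340727, 1345370, 1350019, 1354670, 1359327, 1363990, 1368663, 1373342, 1378033, 1382736, 1387457, 1392180, 1396909, 1401642, 1406393, 1411152, 1415935, 1420722, 1425511, 1430304, 1435103, 1439904, 1444717, 1449534, 1454365, 1459226, 1464097, 1468974, 1473863, 1478766, 1483675, 1488594, 1493525, 1498458, 1503395, 1508338, 1513289, 1518246, 1523213, 1528182, 1533155, 1538142, 1543135, 1548134, 1553137, 1558146, 1563157, 1568178, 1573201, 1578240, 1583291, 1588350, 1593427, 1598508, 1603595, 1608694, 1613795, 1618902, 1624015, 1629134, 1634281, 1639434, 1644601, 1649772, 1654951, 1660140, 1665337, 1670546, 1675773, 1681004, 1686237, 1691474, 1696735, 1702008, 1707287, 1712568, 1717865, 1723168, 1728477,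 1733800, 1739133, 1744480, 1749831, 1755212, 1760599, 1765992, 1771391, 1776798, 1782211, 1787628, 1793047, 1798478, 1803915, 1809356, 1814799, 1820248, 1825719, 1831196, 1836675, 1842158, 1847659, 1853162, 1858669, 1864188, 1869709, 1875236, 1880767, 1886324, 1891887, 1897456, 1903029, 1908610, 1914201, 1919824, 1925463, 1931104, 1936751, 1942402, 1948055, 1953712, 1959371, 1965040, 1970723, 1976412, 1982105, 1987806, 1993517, 1999234, 2004971, 2010712, 2016455, 2022204, 2027983, 2033766, 2039557, 2045358, 2051165, 2056978, 2062799, 2068626, 2074465, 2080308, 2086157, 2092008, 2097865, 2103726, 2109593, 2115462, 2121341, 2127222, 2133119, 2139022, 2144945, 2150872, 2156811, 2162764, 2168745, 2174732, 2180739, 2186750, 2192779, 2198816, 2204859, 2210906, 2216959, 2223026, 2229099, 2235178, 2241267, 2247358, 2253459, 2259572, 2265693, 2271824, 2277957, 2284100, 2290251, 2296414, 2302587, 2308784, 2314983, 2321186, 2327397, 2333614, 2339835, 2346064, 2352311, 2358568, 2364831, 2371100, 2377371, 2383648, 2389935, 2396234, 2402535, 2408846, 2415163, 2421486, 2427815,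 2434152, 2440495, 2446848, 2453207, 2459568, 2465935, 2472308, 2478687, 2485076, 2491473, 2497894, 2504321, 2510770, 2517221, 2523690, 2530163, 2536644, 2543135, 2549656, 2556185, 2562732, 2569283, 2575836, 2582399, 2588968, 2595539, 2602116, 2608697, 2615296, 2621903, 2628522, 2635159, 2641812, 2648471, 2655132, 2661805, 2668484, 2675173, 2681864, 2688565, 2695268, 2701977, 2708696, 2715429, 2722166, 2728927, 2735690, 2742469, 2749250, 2756041, 2762834, 2769637, 2776460, 2783287, 2790116, 2796949, 2803790, 2810647, 2817510, 2824379, 2831250, 2838133, 2845032, 2851939, 2858850, 2865767, 2872714, 2879663, 2886622, 2893583, 2900550, 2907521, 2914498, 2921481, 2928472, 2935469, 2942470, 2949483, 2956502, 2963529, 2970568, 2977611, 2984668, 2991737, 2998816, 3005919, 3013028, 3020149, 3027276, 3034405, 3041556, 3048715, 3055892, 3063079, 3070272, 3077479, 3084690, 3091903, 3099122, 3106351, 3113588, 3120831, 3128078, 3135331, 3142614, 3149911, 3157218, 3164527, 3171848, 3179179, 3186512, 3193861, 3201212, 3208581, 3215974, 3223385, 3230802, 3238235, 3245686, 3253143,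 3260602, 3268079, 3275560, 3283047, 3290536, 3298035, 3305542, 3313059, 3320582, 3328111, 3335648, 3343189, 3350736, 3358285, 3365844, 3373405, 3380978, 3388555, 3396138, 3403727, 3411318, 3418921, 3426528, 3434149, 3441788, 3449431, 3457080, 3464749, 3472422, 3480103, 3487790, 3495481, 3503180, 3510883, 3518600, 3526323, 3534050, 3541791, 3549544, 3557301, 3565060, 3572849, 3580642, 3588459, 3596282, 3604111, 3611952, 3619805, 3627672, 3635545, 3643422, 3651301, 3659184, 3667085, 3674992, 3682911, 3690838]

lemma chain_P : chain P 0 = true := by decide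

lemma qOK_Q : qOK Q (P.drop 1) = true := by decide

lemma p_eval (i : ℕ) (hi : i < 1001) : p (i+1) = P.getD i 0 := by
  have h := chain_spec P 0 chain_P i (by rw [show P.length = 1001 from rfl]; exact hi)
  rw [p, Nat.add_sub_cancel]
  simpa using h

lemma getD_drop (l : List ℕ) (n i : ℕ) : (l.drop n).getD i 0 = l.getD (n+i) 0 := by
  simp [List.getD, List.getElem?_drop]

lemma S_eval : ∀ k, k ≤ 1000 → S k 2 = Q.getD k 0 := by
  intro k
  induction k with
  | zero => intro _; simp [S]; rfl
  | succ k ihk =>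
    intro hk
    have hk' : k ≤ 1000 := Nat.le_of_succ_le hk
    have h1 : (2 + k : ℕ) = (k+1)+1 := by ring
    have h2 : p ((k+1)+1) = (P.drop 1).getD k 0 := by
      rw [p_eval (k+1) (by omega), getD_drop, Nat.add_comm]
    have h3 : Q.getD (k+1) 0 = Q.getD k 0 + (P.drop 1).getD k 0 :=
      qOK_spec (P.drop 1) Q qOK_Q k
        (by rw [show (P.drop 1).length = 1000 from rfl]; omega)
    rw [S, Finset.sum_range_succ, ← S, ihk hk', h1, h2, h3]

lemma sum_take (l : List ℕ) (b : ℕ → Bool) :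
    ∀ n, n ≤ l.length → (∑ i ∈ Finset.range n, if b (l.getD i 0) = true then 1 else 0) =
      ((l.map (fun v => if b v then 1 else 0)).take n).sum := by
  intro n
  induction n with
  | zero => intro _; simp
  | succ n ihn =>
    intro hn
    have hn' : n ≤ l.length := Nat.le_of_succ_le hn
    have hlen : n < (l.map (fun v => if b v then 1 else 0)).length := by
      rw [List.length_map]; omega
    rw [Finset.sum_range_succ, ihn hn', List.sum_take_succ _ n hlen]
    congr 1
    rw [List.getElem_map, List.getD_eq_getElem _ _ (by omega)]

/-- For `n = 2` (`p_2 = 3`), there are exactly `71` lengths `3 ≤ k ≤ 1000`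
such that `S_k(p_2)` is prime. -/
theorem card_admissible_lengths_three :
    ((Finset.Icc 3 1000).filter fun k => Nat.Prime (S k 2)).card = 71 := by
  rw [Finset.card_filter, ← Finset.Ico_add_one_right_eq_Icc, Finset.sum_Ico_eq_sum_range,
    show (1000 + 1 : ℕ) = 1001 from rfl]
  have hsum : ∀ i ∈ Finset.range (1001 - 3),
      (if Nat.Prime (S (3 + i) 2) then 1 else 0) =
      (if isPrimeB ((Q.drop 3).getD i 0) = true then 1 else 0) := by
    intro i hi
    rw [Finset.mem_range] at hi
    rw [S_eval (3 + i) (by omega), ← getD_drop]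
    exact if_congr (isPrimeB_iff _).symm rfl rfl
  rw [Finset.sum_congr rfl hsum,
    show (1001 - 3 : ℕ) = 998 from rfl,
    sum_take (Q.drop 3) isPrimeB 998 (by rw [show (Q.drop 3).length = 998 from rfl])]
  decide
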